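/- For every real a, the normalized four-qubit state |ψ₄⟩ = (a(|0000⟩ + |1111⟩) + |0011⟩ + |0101⟩ + |0110⟩)/√(2a² + 3) satisfies 2(1 − tr(ρ₁²)) = 4a²(a² + 3)/(2a² + 3)² and 2(1 − tr(ρ₂²)) = 4(a⁴ + 3a² + 2)/(2a² + 3)²; in particular C₁ = 0 if and only if a = 0. -/

import Mathlib

open scoped BigOperators

noncomputable section

/-- A four-qubit pure state amplitude function on the computational basis. -/
abbrev QState := Fin 2 → Fin 2 → Fin 2 → Fin 2 → ℂ

/-- Reduced density matrix of qubit 1. -/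
def rho1 (ψ : QState) (a b : Fin 2) : ℂ := ∑ i, ∑ j, ∑ k, ψ a i j k * star (ψ b i j k)
/-- Reduced density matrix of qubit 2. -/
def rho2 (ψ : QState) (a b : Fin 2) : ℂ := ∑ i, ∑ j, ∑ k, ψ i a j k * star (ψ i b j k)
/-- Reduced density matrix of qubit 3. -/
def rho3 (ψ : QState) (a b : Fin 2) : ℂ := ∑ i, ∑ j, ∑ k, ψ i j a k * star (ψ i j b k)
/-- Reduced density matrix of qubit 4. -/
def rho4 (ψ : QState) (a b : Fin 2) : ℂ := ∑ i, ∑ j, ∑ k, ψ i j k a * star (ψ i j k b)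

/-- tr(ρ²) for a one-qubit density matrix. -/
def purity1 (ρ : Fin 2 → Fin 2 → ℂ) : ℂ := ∑ a, ∑ b, ρ a b * ρ b a

/-- Reduced density matrix of qubits 1,2. -/
def rho12 (ψ : QState) (a b : Fin 2 × Fin 2) : ℂ :=
  ∑ i, ∑ j, ψ a.1 a.2 i j * star (ψ b.1 b.2 i j)
/-- Reduced density matrix of qubits 1,3. -/
def rho13 (ψ : QState) (a b : Fin 2 × Fin 2) : ℂ :=
  ∑ i, ∑ j, ψ a.1 i a.2 j * star (ψ b.1 i b.2 j)
/-- Reduced density matrix of qubits 1,4. -/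
def rho14 (ψ : QState) (a b : Fin 2 × Fin 2) : ℂ :=
  ∑ i, ∑ j, ψ a.1 i j a.2 * star (ψ b.1 i j b.2)

/-- tr(ρ²) for a two-qubit density matrix. -/
def purity2 (ρ : Fin 2 × Fin 2 → Fin 2 × Fin 2 → ℂ) : ℂ := ∑ a, ∑ b, ρ a b * ρ b a

/-- |ψ₄⟩ = (a(|0000⟩+|1111⟩) + |0011⟩ + |0101⟩ + |0110⟩)/√(2a²+3) -/
def psi4 (a : ℝ) : QState := fun i j k l =>
  (((if (i, j, k, l) = (0, 0, 0, 0) ∨ (i, j, k, l) = (1, 1, 1, 1) then (a : ℂ) else 0) +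
    (if (i, j, k, l) = (0, 0, 1, 1) ∨ (i, j, k, l) = (0, 1, 0, 1) ∨
        (i, j, k, l) = (0, 1, 1, 0) then 1 else 0)) / ((Real.sqrt (2 * a ^ 2 + 3) : ℝ) : ℂ))

lemma hden (a : ℝ) : ((Real.sqrt (2*a^2+3) : ℂ))^2 = 2*(a:ℂ)^2+3 := by
  rw [← Complex.ofReal_pow, Real.sq_sqrt (by positivity)]; push_cast; ring

lemma hden0 (a : ℝ) : ((Real.sqrt (2*a^2+3) : ℂ)) ≠ 0 := by
  have : (0:ℝ) < Real.sqrt (2*a^2+3) := Real.sqrt_pos.2 (by positivity)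
  exact_mod_cast this.ne'

lemma hcden (a : ℝ) : (2*(a:ℂ)^2+3) ≠ 0 := by
  have h3 : (2*a^2+3 : ℝ) ≠ 0 := by positivity
  exact_mod_cast Complex.ofReal_ne_zero.2 h3

lemma p1 (a : ℝ) : purity1 (rho1 (psi4 a)) =
    (((((a^2+3)^2 + a^4)/(2*a^2+3)^2 : ℝ)) : ℂ) := by
  have h := hden a
  have hc := hcden a
  simp only [purity1, rho1, psi4, Fin.sum_univ_two, Prod.mk.injEq]
  norm_num [Fin.ext_iff]
  field_simp
  rw [show ((Real.sqrt (2*a^2+3):ℂ))^4 = ((Real.sqrt (2*a^2+3):ℂ)^2)^2 by ring, h]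
  ring

lemma p2 (a : ℝ) : purity1 (rho2 (psi4 a)) =
    (((((a^2+1)^2 + (a^2+2)^2)/(2*a^2+3)^2 : ℝ)) : ℂ) := by
  have h := hden a
  have hc := hcden a
  simp only [purity1, rho2, psi4, Fin.sum_univ_two, Prod.mk.injEq]
  norm_num [Fin.ext_iff]
  field_simp
  rw [show ((Real.sqrt (2*a^2+3):ℂ))^4 = ((Real.sqrt (2*a^2+3):ℂ)^2)^2 by ring, h]
  ring

theorem stmt3 (a : ℝ) :
    (2 : ℂ) * (1 - purity1 (rho1 (psi4 a))) =
      ((4 * a ^ 2 * (a ^ 2 + 3) / (2 * a ^ 2 + 3) ^ 2 : ℝ) : ℂ) ∧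
    (2 : ℂ) * (1 - purity1 (rho2 (psi4 a))) =
      ((4 * (a ^ 4 + 3 * a ^ 2 + 2) / (2 * a ^ 2 + 3) ^ 2 : ℝ) : ℂ) ∧
    (Real.sqrt (2 * (1 - (purity1 (rho1 (psi4 a))).re)) = 0 ↔ a = 0) := by
  have h3 : (2*a^2+3 : ℝ) ≠ 0 := by positivity
  have key1 : (2 : ℝ) * (1 - ((a^2+3)^2 + a^4)/(2*a^2+3)^2) =
      4 * a ^ 2 * (a ^ 2 + 3) / (2 * a ^ 2 + 3) ^ 2 := by
    field_simp; ring
  refine ⟨?_, ?_, ?_⟩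
  · rw [p1]
    rw [show ((2:ℂ)) = ((2:ℝ):ℂ) by norm_num, show ((1:ℂ)) = ((1:ℝ):ℂ) by norm_num,
      ← Complex.ofReal_sub, ← Complex.ofReal_mul]
    exact congrArg _ key1
  · rw [p2]
    rw [show ((2:ℂ)) = ((2:ℝ):ℂ) by norm_num, show ((1:ℂ)) = ((1:ℝ):ℂ) by norm_num,
      ← Complex.ofReal_sub, ← Complex.ofReal_mul]
    refine congrArg _ ?_
    field_simp; ring
  · have hre : (purity1 (rho1 (psi4 a))).re = ((a^2+3)^2 + a^4)/(2*a^2+3)^2 := by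
      rw [p1, Complex.ofReal_re]
    rw [hre, key1]
    constructor
    · intro hE
      by_contra ha
      have hpos : 0 < 4 * a ^ 2 * (a ^ 2 + 3) / (2 * a ^ 2 + 3) ^ 2 := by positivity
      have := Real.sqrt_pos.2 hpos
      linarith
    · intro ha; subst ha; simp
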